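/- arXiv:1305.2605 — 3 statements merged into one kernel-verified Lean document; each statement's English description precedes it below -/
import Mathlib

section
/- Let P₀ be a rank-one orthogonal projection on a Hilbert space H and ψ₀ a unit vector in its range. For any bounded self-adjoint operator f on H, the operator norm of the commutator [P₀, f] satisfies ‖[P₀,f]‖² = ⟨fψ₀, fψ₀⟩ − |⟨ψ₀, fψ₀⟩|², i.e. it equals the variance of f in the vector state ψ₀. -/
open ContinuousLinearMap

/-!
Write `f ψ₀ = ⟪ψ₀, f ψ₀⟫ ψ₀ + g` with `g ⊥ ψ₀`. Since `⟪ψ₀, f ψ₀⟫` is real, the commutator is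
`x ↦ ⟪g, x⟫ ψ₀ - ⟪ψ₀, x⟫ g`, an operator acting on the orthonormal pair `ψ₀, g / ‖g‖` as `‖g‖`
times a rotation and vanishing on their orthogonal complement, so its norm is `‖g‖`. By
Pythagoras, `‖g‖² = ‖f ψ₀‖² - |⟪ψ₀, f ψ₀⟫|²`.
-/

section

variable {𝕜 E : Type*} [RCLike 𝕜] [NormedAddCommGroup E] [InnerProductSpace 𝕜 E] {e : E}

local notation "⟪" x ", " y "⟫" => inner 𝕜 x y

theorem inner_sub_inner_smul_self_eq_zero (he : ‖e‖ = 1) (v : E) :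
    ⟪e, v - ⟪e, v⟫ • e⟫ = 0 := by
  rw [inner_sub_right, inner_smul_right, inner_self_eq_one_of_norm_eq_one he, mul_one, sub_self]

theorem norm_sub_inner_smul_sq (he : ‖e‖ = 1) (v : E) :
    ‖v - ⟪e, v⟫ • e‖ ^ 2 = ‖v‖ ^ 2 - ‖⟪e, v⟫‖ ^ 2 := by
  have h_orth : ⟪⟪e, v⟫ • e, v - ⟪e, v⟫ • e⟫ = 0 := by
    rw [inner_smul_left, inner_sub_inner_smul_self_eq_zero he, mul_zero]
  have h_pyth := norm_add_sq_eq_norm_sq_add_norm_sq_of_inner_eq_zero _ _ h_orth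
  rw [add_sub_cancel, norm_smul, he, mul_one] at h_pyth
  simp only [sq]; linarith

theorem norm_inner_smul_sub_inner_smul_le (he : ‖e‖ = 1) {g : E} (hg : ⟪e, g⟫ = 0) (x : E) :
    ‖⟪g, x⟫ • e - ⟪e, x⟫ • g‖ ≤ ‖g‖ * ‖x‖ := by
  have h_cs : ‖⟪g, x⟫‖ ≤ ‖g‖ * ‖x - ⟪e, x⟫ • e‖ := by
    have h_ge : ⟪g, e⟫ = 0 := inner_eq_zero_symm.mp hg
    simpa [inner_sub_right, inner_smul_right, h_ge] using
      norm_inner_le_norm (𝕜 := 𝕜) g (x - ⟪e, x⟫ • e)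
  have h_orth : ⟪⟪g, x⟫ • e, -(⟪e, x⟫ • g)⟫ = 0 := by
    rw [inner_neg_right, inner_smul_left, inner_smul_right, hg, mul_zero, mul_zero, neg_zero]
  have h_pyth := norm_add_sq_eq_norm_sq_add_norm_sq_of_inner_eq_zero _ _ h_orth
  rw [← sub_eq_add_neg, norm_neg, norm_smul, norm_smul, he, mul_one] at h_pyth
  have h_x := norm_sub_inner_smul_sq (𝕜 := 𝕜) he x
  refine (pow_le_pow_iff_left₀ (norm_nonneg _) (by positivity) two_ne_zero).mp ?_
  calc ‖⟪g, x⟫ • e - ⟪e, x⟫ • g‖ ^ 2 = ‖⟪g, x⟫‖ ^ 2 + ‖⟪e, x⟫‖ ^ 2 * ‖g‖ ^ 2 := by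
        rw [sq, h_pyth]; ring
    _ ≤ ‖g‖ ^ 2 * ‖x - ⟪e, x⟫ • e‖ ^ 2 + ‖⟪e, x⟫‖ ^ 2 * ‖g‖ ^ 2 := by
        gcongr; rw [← mul_pow]; exact pow_le_pow_left₀ (norm_nonneg _) h_cs 2
    _ = (‖g‖ * ‖x‖) ^ 2 := by rw [h_x]; ring

theorem opNorm_eq_of_apply_eq_inner_smul_sub_inner_smul (he : ‖e‖ = 1) {g : E}
    (hg : ⟪e, g⟫ = 0) {T : E →L[𝕜] E} (hT : ∀ x, T x = ⟪g, x⟫ • e - ⟪e, x⟫ • g) :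
    ‖T‖ = ‖g‖ := by
  refine le_antisymm (opNorm_le_bound _ (norm_nonneg g) fun x ↦ ?_) ?_
  · rw [hT]; exact norm_inner_smul_sub_inner_smul_le he hg x
  · have h_Te : T e = -g := by
      rw [hT, ← inner_conj_symm, hg, map_zero, zero_smul, inner_self_eq_one_of_norm_eq_one he,
        one_smul, zero_sub]
    simpa [h_Te, he] using T.le_opNorm e

theorem commutator_apply_of_apply_eq_inner_smul [CompleteSpace E] {ψ : E} {P f : E →L[𝕜] E}
    (hP : ∀ x, P x = ⟪ψ, x⟫ • ψ) (hf : IsSelfAdjoint f) (x : E) :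
    (P ∘L f - f ∘L P) x = ⟪f ψ - ⟪ψ, f ψ⟫ • ψ, x⟫ • ψ - ⟪ψ, x⟫ • (f ψ - ⟪ψ, f ψ⟫ • ψ) := by
  have h_sym : ∀ y z, ⟪f y, z⟫ = ⟪y, f z⟫ := hf.isSymmetric
  have h_real : starRingEnd 𝕜 ⟪ψ, f ψ⟫ = ⟪ψ, f ψ⟫ := by rw [inner_conj_symm, h_sym]
  rw [sub_apply, comp_apply, comp_apply, hP, hP, map_smul, ← h_sym ψ x, inner_sub_left,
    inner_smul_left, h_real]
  module

end

/-- For a rank-one orthogonal projection `P₀ = ψ₀⟨ψ₀,·⟩` (with `ψ₀` a unit vector) and a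
bounded self-adjoint operator `f` on a complex Hilbert space, the square of the operator norm
of the commutator `[P₀, f]` equals the variance of `f` in the vector state `ψ₀`. -/
theorem norm_commutator_rank_one_projection_sq_eq_variance
    {H : Type*} [NormedAddCommGroup H] [InnerProductSpace ℂ H] [CompleteSpace H]
    (ψ₀ : H) (hψ₀ : ‖ψ₀‖ = 1)
    (P₀ : H →L[ℂ] H) (hP₀ : ∀ x, P₀ x = (inner ℂ ψ₀ x : ℂ) • ψ₀)
    (f : H →L[ℂ] H) (hf : IsSelfAdjoint f) :
    ‖P₀ ∘L f - f ∘L P₀‖ ^ 2 =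
      Complex.re (inner ℂ (f ψ₀) (f ψ₀) : ℂ) - ‖(inner ℂ ψ₀ (f ψ₀) : ℂ)‖ ^ 2 := by
  rw [opNorm_eq_of_apply_eq_inner_smul_sub_inner_smul hψ₀
      (inner_sub_inner_smul_self_eq_zero hψ₀ (f ψ₀))
      (commutator_apply_of_apply_eq_inner_smul hP₀ hf),
    norm_sub_inner_smul_sq hψ₀, ← RCLike.re_to_complex, inner_self_eq_norm_sq]
end

section
/- On the lattice Z with the Dirac operator D as above, the spectral distance between the pure states δ_m and δ_n equals |m − n|. -/
open ContinuousLinearMap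

/-- The basis vector `|n⟩₊`/`|n⟩₋` of `H = l²(ℤ) ⊗ ℂ² = l²(ℤ × Bool)`. -/
noncomputable def latticeBasis (n : ℤ) (s : Bool) : lp (fun _ : ℤ × Bool => ℂ) 2 :=
  lp.single 2 (n, s) 1

/-!
The commutator `[D, a]` sends `|n⟩₊` to `(a_n - a_{n+1}) |n+1⟩₋` and `|n⟩₋` to
`(a_n - a_{n-1}) |n-1⟩₊`: it is a permutation of the basis weighted by the nearest-neighbour
differences of `a`, so its norm is the largest of these differences. Hence `‖[D, a]‖ ≤ 1` exactly
when `a` is `1`-Lipschitz on `ℤ`, which bounds `a_m - a_n` by `|m - n|`, and the bound is attained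
by the finitely supported tent function `k ↦ max (|m - n| - |k - m|) 0`.
-/

open Filter Topology
open scoped ENNReal NNReal

namespace lp

variable {ι 𝕜 : Type*} [NontriviallyNormedField 𝕜] [DecidableEq ι] {p : ℝ≥0∞} [Fact (1 ≤ p)]
  {T : lp (fun _ : ι => 𝕜) p →L[𝕜] lp (fun _ : ι => 𝕜) p} {c : ι → 𝕜} {e : ι ≃ ι}

theorem apply_eq_of_map_single (hp : p ≠ ∞)
    (hT : ∀ i, T (lp.single p i 1) = c i • lp.single p (e i) 1) (f : lp (fun _ : ι => 𝕜) p)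
    (j : ι) : T f j = c (e.symm j) * f (e.symm j) := by
  suffices h : (evalCLM 𝕜 _ p j).comp T = c (e.symm j) • evalCLM 𝕜 _ p (e.symm j) from
    congr($h f)
  refine ext_continuousLinearMap hp fun i => ext_ring ?_
  by_cases hi : i = e.symm j
  · subst hi
    simp [evalCLM, hT]
  · have hj : j ≠ e i := fun h => hi (by simp [h])
    simp [evalCLM, hT, hj, Ne.symm hi]

theorem opNorm_le_of_map_single (hp : p ≠ ∞) {C : ℝ} (hC : 0 ≤ C)
    (hT : ∀ i, T (lp.single p i 1) = c i • lp.single p (e i) 1) (hc : ∀ i, ‖c i‖ ≤ C) :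
    ‖T‖ ≤ C := by
  have hp₀ : 0 < p.toReal := ENNReal.toReal_pos (zero_lt_one.trans_le Fact.out).ne' hp
  refine T.opNorm_le_bound hC fun f => norm_le_of_forall_sum_le hp₀ (by positivity) fun s => ?_
  calc ∑ j ∈ s, ‖T f j‖ ^ p.toReal
      ≤ ∑ j ∈ s, (C * ‖f (e.symm j)‖) ^ p.toReal := by
        gcongr with j
        rw [apply_eq_of_map_single hp hT, norm_mul]
        gcongr
        exact hc _
    _ = C ^ p.toReal * ∑ i ∈ s.map e.symm.toEmbedding, ‖f i‖ ^ p.toReal := by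
        simp [Real.mul_rpow hC (norm_nonneg _), Finset.mul_sum]
    _ ≤ C ^ p.toReal * ‖f‖ ^ p.toReal := by gcongr; exact sum_rpow_le_norm_rpow hp₀ f _
    _ = (C * ‖f‖) ^ p.toReal := (Real.mul_rpow hC (norm_nonneg _)).symm

variable {D M : lp (fun _ : ι => 𝕜) p →L[𝕜] lp (fun _ : ι => 𝕜) p} {d : ι → 𝕜}

theorem commutator_map_single (hD : ∀ i, D (lp.single p i 1) = lp.single p (e i) 1)
    (hM : ∀ i, M (lp.single p i 1) = d i • lp.single p i 1) (i : ι) :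
    (D ∘L M - M ∘L D) (lp.single p i 1) = (d i - d (e i)) • lp.single p (e i) 1 := by
  simp [hD, hM, sub_smul]

theorem norm_sub_le_norm_commutator (hD : ∀ i, D (lp.single p i 1) = lp.single p (e i) 1)
    (hM : ∀ i, M (lp.single p i 1) = d i • lp.single p i 1) (i : ι) :
    ‖d i - d (e i)‖ ≤ ‖D ∘L M - M ∘L D‖ := by
  have h_norm_single : ∀ j, ‖(lp.single p j 1 : lp (fun _ : ι => 𝕜) p)‖ = 1 := fun j => by
    simp [lp.norm_single (zero_lt_one.trans_le Fact.out)]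
  simpa [commutator_map_single hD hM, norm_smul, h_norm_single] using
    (D ∘L M - M ∘L D).le_opNorm (lp.single p i 1)

theorem norm_commutator_le (hp : p ≠ ∞) {C : ℝ} (hC : 0 ≤ C)
    (hD : ∀ i, D (lp.single p i 1) = lp.single p (e i) 1)
    (hM : ∀ i, M (lp.single p i 1) = d i • lp.single p i 1) (hd : ∀ i, ‖d i - d (e i)‖ ≤ C) :
    ‖D ∘L M - M ∘L D‖ ≤ C :=
  opNorm_le_of_map_single hp hC (commutator_map_single hD hM) hd

end lp

theorem Int.lipschitzWith_one_of_dist_add_one_le {α : Type*} [PseudoMetricSpace α] {f : ℤ → α}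
    (hf : ∀ k, dist (f (k + 1)) (f k) ≤ 1) : LipschitzWith 1 f := by
  refine .of_dist_le_mul fun j k => ?_
  wlog hkj : k ≤ j generalizing j k
  · simpa only [dist_comm] using this k j (le_of_not_ge hkj)
  rw [NNReal.coe_one, one_mul, Int.dist_eq, abs_of_nonneg (by simpa using hkj)]
  induction j, hkj using Int.leInduction with
  | base => simp
  | succ j _ ih =>
    calc dist (f (j + 1)) (f k) ≤ dist (f (j + 1)) (f j) + dist (f j) (f k) := dist_triangle ..
      _ ≤ ((j + 1 : ℤ) : ℝ) - k := by push_cast; linarith [hf j]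

section Tent

variable {X : Type*} [MetricSpace X] (c : X)

def tent (r : ℝ) (x : X) : ℝ := max (r - dist x c) 0

theorem lipschitzWith_tent (r : ℝ) : LipschitzWith 1 (tent c r) := by
  have h := ((LipschitzWith.const r).sub (LipschitzWith.dist_left c)).max_const 0
  rwa [zero_add] at h

theorem tent_self {r : ℝ} (hr : 0 ≤ r) : tent c r c = r := by
  simp [tent, hr]

theorem tent_of_le_dist {r : ℝ} {x : X} (hx : r ≤ dist x c) : tent c r x = 0 := by
  simp [tent, hx]

theorem hasCompactSupport_tent [ProperSpace X] (r : ℝ) : HasCompactSupport (tent c r) :=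
  .intro (isCompact_closedBall c r) fun _ hx => tent_of_le_dist c (not_le.1 hx).le

end Tent

def latticeHop : Equiv.Perm (ℤ × Bool) :=
  Function.Involutive.toPerm (fun i => bif i.2 then (i.1 + 1, false) else (i.1 - 1, true))
    (by rintro ⟨k, _ | _⟩ <;> simp)

@[simp] theorem latticeHop_true (k : ℤ) : latticeHop (k, true) = (k + 1, false) := rfl

@[simp] theorem latticeHop_false (k : ℤ) : latticeHop (k, false) = (k - 1, true) := rfl

theorem dist_latticeHop_fst (i : ℤ × Bool) : dist (latticeHop i).1 i.1 = 1 := by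
  rcases i with ⟨k, _ | _⟩ <;> simp

theorem norm_commutator_le_one_iff_lipschitzWith
    {D M : lp (fun _ : ℤ × Bool => ℂ) 2 →L[ℂ] lp (fun _ : ℤ × Bool => ℂ) 2} {a : ℤ → ℝ}
    (hD : ∀ i, D (lp.single 2 i 1) = lp.single 2 (latticeHop i) 1)
    (hM : ∀ i, M (lp.single 2 i 1) = (a i.1 : ℂ) • lp.single 2 i 1) :
    ‖D ∘L M - M ∘L D‖ ≤ 1 ↔ LipschitzWith 1 a := by
  have hd (i : ℤ × Bool) :
      ‖(a i.1 : ℂ) - a (latticeHop i).1‖ = dist (a (latticeHop i).1) (a i.1) := by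
    rw [← Complex.ofReal_sub, Complex.norm_real, Real.norm_eq_abs, Real.dist_eq, abs_sub_comm]
  constructor
  · intro h
    refine Int.lipschitzWith_one_of_dist_add_one_le fun k => ?_
    have hk := (lp.norm_sub_le_norm_commutator hD hM (k, true)).trans h
    rwa [hd, latticeHop_true] at hk
  · intro ha
    refine lp.norm_commutator_le (by simp) zero_le_one hD hM fun i => ?_
    simpa [hd, dist_latticeHop_fst] using ha.dist_le_mul (latticeHop i).1 i.1

/-- On the lattice `ℤ` with the Dirac operator `D|n⟩₊ = |n+1⟩₋`, `D|n⟩₋ = |n-1⟩₊`, the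
spectral distance between the pure states `δ_m` and `δ_n` equals `|m - n|`.  Here `A a` is
the diagonal (multiplication) operator associated to a real function `a ∈ C₀(ℤ)`, and the
spectral distance is the supremum of `a_m - a_n` over self-adjoint `a ∈ C₀(ℤ)` with
`‖[D, a]‖ ≤ 1`. -/
theorem lattice_spectral_distance_pure_states
    (D : lp (fun _ : ℤ × Bool => ℂ) 2 →L[ℂ] lp (fun _ : ℤ × Bool => ℂ) 2)
    (hD₁ : ∀ n : ℤ, D (latticeBasis n true) = latticeBasis (n + 1) false)
    (hD₂ : ∀ n : ℤ, D (latticeBasis n false) = latticeBasis (n - 1) true)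
    (A : (ℤ → ℝ) → (lp (fun _ : ℤ × Bool => ℂ) 2 →L[ℂ] lp (fun _ : ℤ × Bool => ℂ) 2))
    (hA : ∀ a : ℤ → ℝ, Filter.Tendsto a Filter.cofinite (nhds 0) →
      ∀ (n : ℤ) (s : Bool), A a (latticeBasis n s) = (a n : ℂ) • latticeBasis n s)
    (m n : ℤ) :
    sSup {r : ℝ | ∃ a : ℤ → ℝ, Filter.Tendsto a Filter.cofinite (nhds 0) ∧
        ‖D ∘L A a - A a ∘L D‖ ≤ 1 ∧ r = a m - a n} = |(m : ℝ) - (n : ℝ)| := by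
  have hD : ∀ i, D (lp.single 2 i 1) = lp.single 2 (latticeHop i) 1 := by
    rintro ⟨k, _ | _⟩
    exacts [hD₂ k, hD₁ k]
  have hcomm (a : ℤ → ℝ) (ha : Tendsto a cofinite (𝓝 0)) :
      ‖D ∘L A a - A a ∘L D‖ ≤ 1 ↔ LipschitzWith 1 a :=
    norm_commutator_le_one_iff_lipschitzWith hD fun i => hA a ha i.1 i.2
  have htent : Tendsto (tent m |(m : ℝ) - n|) cofinite (𝓝 0) := by
    simpa [cocompact_eq_cofinite] using (hasCompactSupport_tent m _).is_zero_at_infty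
  refine IsGreatest.csSup_eq ⟨⟨_, htent, (hcomm _ htent).2 (lipschitzWith_tent _ _), ?_⟩, ?_⟩
  · rw [tent_self _ (abs_nonneg _), tent_of_le_dist _ (by rw [Int.dist_eq, abs_sub_comm]),
      sub_zero]
  · rintro _ ⟨a, ha, hnorm, rfl⟩
    have hlip := ((hcomm a ha).1 hnorm).dist_le_mul m n
    rw [NNReal.coe_one, one_mul, Real.dist_eq, Int.dist_eq] at hlip
    exact (le_abs_self _).trans hlip
end

section
/- Let D be self-adjoint on H, P a spectral projection of D (so [D,P] = 0), D_P := PDP, and ψ₀ ∈ PH a unit vector. Define ψ_t := e^{itD}ψ₀ and the vector states Ψ_t(a) = ⟨ψ_t, a ψ_t⟩ for bounded a. Then for all t₁, t₂ and all a ∈ B(H), |Ψ_{t₁}(a) − Ψ_{t₂}(a)| ≤ ‖[D_P, a]‖ · |t₁ − t₂|. Consequently the spectral distance associated to D_P between Ψ_{t₁} and Ψ_{t₂} is at most |t₁ − t₂|. -/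
/-! Because `P` commutes with `D`, the orbit `ψ_t` stays in `PH`, where `D` and `D_P` act alike;
so the Heisenberg equation `d/dt Ψ_t(a) = -i Ψ_t([D, a])` also holds with `D_P` in place of `D`.
Since `e^{itD}` is unitary, `ψ_t` is a unit vector and `|Ψ_t([D_P, a])| ≤ ‖[D_P, a]‖`; the mean
value inequality then gives the Lipschitz bound, and the distance bound follows from
`Re z ≤ |z|`. -/

open ContinuousLinearMap

/-- The orbit `ψ_t = e^{itD} ψ₀` of a vector `ψ₀` under the geodesic flow of `D`. -/
noncomputable def geodesicFlowVec {H : Type*} [NormedAddCommGroup H] [InnerProductSpace ℂ H]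
    [CompleteSpace H] (D : H →L[ℂ] H) (ψ₀ : H) (t : ℝ) : H :=
  NormedSpace.exp (Complex.I • (t : ℂ) • D) ψ₀

open NormedSpace Complex
open scoped InnerProductSpace

theorem hasDerivAt_exp_smul_apply {E : Type*} [NormedAddCommGroup E] [NormedSpace ℂ E]
    [CompleteSpace E] (A : E →L[ℂ] E) (v : E) (t : ℝ) :
    HasDerivAt (fun s : ℝ => exp (s • A) v) (A (exp (t • A) v)) t :=
  ((apply ℂ E v).restrictScalars ℝ).hasFDerivAt.comp_hasDerivAt t
    (hasDerivAt_exp_smul_const' A t)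

section

variable {H : Type*} [NormedAddCommGroup H] [InnerProductSpace ℂ H]

theorem compression_apply_of_commute {D P : H →L[ℂ] H} (hDP : Commute D P) {ψ : H}
    (hψ : P ψ = ψ) : (P ∘L D ∘L P) ψ = D ψ := by
  have h : D (P ψ) = P (D ψ) := DFunLike.congr_fun hDP ψ
  rw [hψ] at h
  change P (D (P ψ)) = D ψ
  rw [hψ, ← h]

theorem norm_inner_apply_le_opNorm (C : H →L[ℂ] H) {ψ : H} (hψ : ‖ψ‖ = 1) :
    ‖⟪ψ, C ψ⟫_ℂ‖ ≤ ‖C‖ :=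
  calc ‖⟪ψ, C ψ⟫_ℂ‖ ≤ ‖ψ‖ * ‖C ψ‖ := norm_inner_le_norm _ _
    _ ≤ ‖ψ‖ * (‖C‖ * ‖ψ‖) := by gcongr; exact C.le_opNorm ψ
    _ = ‖C‖ := by rw [hψ, one_mul, mul_one]

variable [CompleteSpace H]

theorem geodesicFlowVec_eq_exp_smul (D : H →L[ℂ] H) (ψ₀ : H) (t : ℝ) :
    geodesicFlowVec D ψ₀ t = exp (t • (I • D)) ψ₀ := by
  rw [geodesicFlowVec, smul_comm, Complex.coe_smul]

theorem hasDerivAt_geodesicFlowVec (D : H →L[ℂ] H) (ψ₀ : H) (t : ℝ) :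
    HasDerivAt (geodesicFlowVec D ψ₀) (I • D (geodesicFlowVec D ψ₀ t)) t := by
  rw [funext (geodesicFlowVec_eq_exp_smul D ψ₀)]
  exact hasDerivAt_exp_smul_apply (I • D) ψ₀ t

theorem norm_exp_apply_of_mem_skewAdjoint {A : H →L[ℂ] H} (hA : A ∈ skewAdjoint (H →L[ℂ] H))
    (ψ : H) : ‖exp A ψ‖ = ‖ψ‖ := by
  let : NormedAlgebra ℚ (H →L[ℂ] H) := .restrictScalars ℚ ℂ _
  have hU : exp A ∈ unitary (H →L[ℂ] H) := exp_mem_unitary_of_mem_skewAdjoint hA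
  exact norm_map_of_mem_unitary hU ψ

theorem norm_geodesicFlowVec {D : H →L[ℂ] H} (hD : IsSelfAdjoint D) (ψ₀ : H) (t : ℝ) :
    ‖geodesicFlowVec D ψ₀ t‖ = ‖ψ₀‖ :=
  norm_exp_apply_of_mem_skewAdjoint
    ((IsSelfAdjoint.smul (conj_ofReal t) hD).smul_mem_skewAdjoint conj_I) ψ₀

theorem apply_geodesicFlowVec_of_commute {D P : H →L[ℂ] H} (hDP : Commute D P) {ψ₀ : H}
    (hψ₀ : P ψ₀ = ψ₀) (t : ℝ) :
    P (geodesicFlowVec D ψ₀ t) = geodesicFlowVec D ψ₀ t := by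
  have hcomm : Commute P (exp (I • (t : ℂ) • D)) :=
    ((hDP.symm.smul_right (t : ℂ)).smul_right I).exp_right
  change (P * _) ψ₀ = _
  rw [hcomm.eq]
  exact congrArg _ hψ₀

theorem hasDerivAt_inner_apply {ψ : ℝ → H} {D : H →L[ℂ] H} (hD : IsSelfAdjoint D)
    (a : H →L[ℂ] H) {t : ℝ} (hψ : HasDerivAt ψ (I • D (ψ t)) t) :
    HasDerivAt (fun s => ⟪ψ s, a (ψ s)⟫_ℂ) (-I * ⟪ψ t, (D ∘L a - a ∘L D) (ψ t)⟫_ℂ) t := by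
  have haψ : HasDerivAt (fun s => a (ψ s)) (a (I • D (ψ t))) t :=
    (a.restrictScalars ℝ).hasFDerivAt.comp_hasDerivAt t hψ
  refine (hψ.inner ℂ haψ).congr_deriv ?_
  have hDsymm : ∀ x y, ⟪D x, y⟫_ℂ = ⟪x, D y⟫_ℂ := hD.isSymmetric
  simp only [map_smul, inner_smul_left, inner_smul_right, sub_apply, comp_apply,
    inner_sub_right, conj_I, hDsymm]
  ring

theorem inner_commutator_eq_of_apply_eq {B B' : H →L[ℂ] H} (hB : IsSelfAdjoint B)
    (hB' : IsSelfAdjoint B') (a : H →L[ℂ] H) {ψ : H} (h : B ψ = B' ψ) :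
    ⟪ψ, (B ∘L a - a ∘L B) ψ⟫_ℂ = ⟪ψ, (B' ∘L a - a ∘L B') ψ⟫_ℂ := by
  have hBsymm : ∀ y, ⟪ψ, B y⟫_ℂ = ⟪B ψ, y⟫_ℂ := fun y => (hB.isSymmetric ψ y).symm
  have hB'symm : ∀ y, ⟪ψ, B' y⟫_ℂ = ⟪B' ψ, y⟫_ℂ := fun y => (hB'.isSymmetric ψ y).symm
  simp only [sub_apply, comp_apply, inner_sub_right, hBsymm, hB'symm, h]

theorem norm_inner_geodesicFlowVec_sub_le {D B : H →L[ℂ] H} (hD : IsSelfAdjoint D)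
    (hB : IsSelfAdjoint B) {ψ₀ : H} (hψ₀ : ‖ψ₀‖ = 1)
    (hBD : ∀ t, B (geodesicFlowVec D ψ₀ t) = D (geodesicFlowVec D ψ₀ t))
    (a : H →L[ℂ] H) (t₁ t₂ : ℝ) :
    ‖⟪geodesicFlowVec D ψ₀ t₁, a (geodesicFlowVec D ψ₀ t₁)⟫_ℂ -
        ⟪geodesicFlowVec D ψ₀ t₂, a (geodesicFlowVec D ψ₀ t₂)⟫_ℂ‖ ≤
      ‖B ∘L a - a ∘L B‖ * |t₁ - t₂| := by
  set ψ := geodesicFlowVec D ψ₀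
  have hderiv (t : ℝ) : HasDerivAt (fun s => ⟪ψ s, a (ψ s)⟫_ℂ)
      (-I * ⟪ψ t, (B ∘L a - a ∘L B) (ψ t)⟫_ℂ) t := by
    rw [inner_commutator_eq_of_apply_eq hB hD a (hBD t)]
    exact hasDerivAt_inner_apply hD a (hasDerivAt_geodesicFlowVec D ψ₀ t)
  have hbound (t : ℝ) : ‖-I * ⟪ψ t, (B ∘L a - a ∘L B) (ψ t)⟫_ℂ‖ ≤ ‖B ∘L a - a ∘L B‖ := by
    rw [norm_mul, norm_neg, norm_I, one_mul]
    exact norm_inner_apply_le_opNorm _ ((norm_geodesicFlowVec hD ψ₀ t).trans hψ₀)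
  simpa only [Real.norm_eq_abs] using convex_univ.norm_image_sub_le_of_norm_hasDerivWithin_le
    (fun t _ => (hderiv t).hasDerivWithinAt) (fun t _ => hbound t) (Set.mem_univ t₂)
    (Set.mem_univ t₁)

end

theorem geodesic_flow_states_distance_bound_general
    {H : Type*} [NormedAddCommGroup H] [InnerProductSpace ℂ H] [CompleteSpace H]
    (D P : H →L[ℂ] H) (hD : IsSelfAdjoint D) (hPsa : IsSelfAdjoint P)
    (hDP : D ∘L P = P ∘L D)
    (ψ₀ : H) (hψ₀ : ‖ψ₀‖ = 1) (hψ₀mem : P ψ₀ = ψ₀)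
    (t₁ t₂ : ℝ) :
    (∀ a : H →L[ℂ] H,
      ‖(inner ℂ (geodesicFlowVec D ψ₀ t₁) (a (geodesicFlowVec D ψ₀ t₁)) : ℂ) -
          (inner ℂ (geodesicFlowVec D ψ₀ t₂) (a (geodesicFlowVec D ψ₀ t₂)) : ℂ)‖ ≤
        ‖(P ∘L D ∘L P) ∘L a - a ∘L (P ∘L D ∘L P)‖ * |t₁ - t₂|) ∧
    sSup {r : ℝ | ∃ a : H →L[ℂ] H, IsSelfAdjoint a ∧
        ‖(P ∘L D ∘L P) ∘L a - a ∘L (P ∘L D ∘L P)‖ ≤ 1 ∧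
        r = Complex.re (inner ℂ (geodesicFlowVec D ψ₀ t₁) (a (geodesicFlowVec D ψ₀ t₁)) : ℂ) -
          Complex.re (inner ℂ (geodesicFlowVec D ψ₀ t₂) (a (geodesicFlowVec D ψ₀ t₂)) : ℂ)} ≤
      |t₁ - t₂| := by
  have hcomm : Commute D P := hDP
  have hDPsa : IsSelfAdjoint (P ∘L D ∘L P) := by
    have h := hD.conjugate_self hPsa
    rwa [mul_assoc] at h
  have key := norm_inner_geodesicFlowVec_sub_le hD hDPsa hψ₀
    (fun t => compression_apply_of_commute hcomm (apply_geodesicFlowVec_of_commute hcomm hψ₀mem t))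
  refine ⟨fun a => key a t₁ t₂, Real.sSup_le ?_ (abs_nonneg _)⟩
  rintro r ⟨a, -, ha, rfl⟩
  calc _ ≤ ‖⟪geodesicFlowVec D ψ₀ t₁, a (geodesicFlowVec D ψ₀ t₁)⟫_ℂ -
        ⟪geodesicFlowVec D ψ₀ t₂, a (geodesicFlowVec D ψ₀ t₂)⟫_ℂ‖ := by
        rw [← sub_re]; exact re_le_norm _
    _ ≤ ‖(P ∘L D ∘L P) ∘L a - a ∘L (P ∘L D ∘L P)‖ * |t₁ - t₂| := key a t₁ t₂
    _ ≤ |t₁ - t₂| := mul_le_of_le_one_left (abs_nonneg _) ha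

/-- Let `D` be self-adjoint, `P` a spectral projection of `D` (so `[D, P] = 0`),
`D_P := P D P`, and `ψ₀ ∈ PH` a unit vector. With `ψ_t := e^{itD}ψ₀` and
`Ψ_t(a) = ⟨ψ_t, a ψ_t⟩`, one has `|Ψ_{t₁}(a) - Ψ_{t₂}(a)| ≤ ‖[D_P, a]‖ · |t₁ - t₂|` for every
bounded operator `a`; consequently the spectral distance associated to `D_P` between
`Ψ_{t₁}` and `Ψ_{t₂}` is at most `|t₁ - t₂|`. -/
theorem geodesic_flow_states_distance_bound
    {H : Type*} [NormedAddCommGroup H] [InnerProductSpace ℂ H] [CompleteSpace H]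
    (D P : H →L[ℂ] H) (hD : IsSelfAdjoint D) (hPsa : IsSelfAdjoint P)
    (hPidem : P ∘L P = P) (hDP : D ∘L P = P ∘L D)
    (ψ₀ : H) (hψ₀ : ‖ψ₀‖ = 1) (hψ₀mem : P ψ₀ = ψ₀)
    (t₁ t₂ : ℝ) :
    (∀ a : H →L[ℂ] H,
      ‖(inner ℂ (geodesicFlowVec D ψ₀ t₁) (a (geodesicFlowVec D ψ₀ t₁)) : ℂ) -
          (inner ℂ (geodesicFlowVec D ψ₀ t₂) (a (geodesicFlowVec D ψ₀ t₂)) : ℂ)‖ ≤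
        ‖(P ∘L D ∘L P) ∘L a - a ∘L (P ∘L D ∘L P)‖ * |t₁ - t₂|) ∧
    sSup {r : ℝ | ∃ a : H →L[ℂ] H, IsSelfAdjoint a ∧
        ‖(P ∘L D ∘L P) ∘L a - a ∘L (P ∘L D ∘L P)‖ ≤ 1 ∧
        r = Complex.re (inner ℂ (geodesicFlowVec D ψ₀ t₁) (a (geodesicFlowVec D ψ₀ t₁)) : ℂ) -
          Complex.re (inner ℂ (geodesicFlowVec D ψ₀ t₂) (a (geodesicFlowVec D ψ₀ t₂)) : ℂ)} ≤
      |t₁ - t₂| :=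
  geodesic_flow_states_distance_bound_general D P hD hPsa hDP ψ₀ hψ₀ hψ₀mem t₁ t₂
end
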